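/- arXiv:1811.10137 — 3 statements merged into one kernel-verified Lean document; each statement's English description precedes it below -/
import Mathlib

section
/- For all indices i, j : Fin n, the folded generators satisfy ⁅H i, F j⁆ = −(A i j) • F j (integer scalar action on L). -/
open scoped Classical

/-- The σ-orbit `⟨i⟩` of an index `i`, as a finite set. -/
noncomputable def sigmaOrbit {n : ℕ} (σ : Equiv.Perm (Fin n)) (i : Fin n) : Finset (Fin n) :=
  Finset.univ.filter fun k => σ.SameCycle i k

/-- `b i = 3 − ∑_{k ∈ ⟨i⟩} a k i`. -/
noncomputable def bFold {n : ℕ} (a : Fin n → Fin n → ℤ) (σ : Equiv.Perm (Fin n))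
    (i : Fin n) : ℤ :=
  3 - ∑ k ∈ sigmaOrbit σ i, a k i

/-- The folded Cartan matrix `A i j = b i · ∑_{k ∈ ⟨i⟩} a k j`. -/
noncomputable def AFold {n : ℕ} (a : Fin n → Fin n → ℤ) (σ : Equiv.Perm (Fin n))
    (i j : Fin n) : ℤ :=
  bFold a σ i * ∑ k ∈ sigmaOrbit σ i, a k j

/-- `E i = ∑_{k ∈ ⟨i⟩} e k`. -/
noncomputable def EFold {n : ℕ} {L : Type*} [LieRing L]
    (σ : Equiv.Perm (Fin n)) (e : Fin n → L) (i : Fin n) : L :=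
  ∑ k ∈ sigmaOrbit σ i, e k

/-- `F i = b i • ∑_{k ∈ ⟨i⟩} f k`. -/
noncomputable def FFold {n : ℕ} {L : Type*} [LieRing L]
    (a : Fin n → Fin n → ℤ) (σ : Equiv.Perm (Fin n)) (f : Fin n → L) (i : Fin n) : L :=
  bFold a σ i • ∑ k ∈ sigmaOrbit σ i, f k

/-- `H i = b i • ∑_{k ∈ ⟨i⟩} h k`. -/
noncomputable def HFold {n : ℕ} {L : Type*} [LieRing L]
    (a : Fin n → Fin n → ℤ) (σ : Equiv.Perm (Fin n)) (h : Fin n → L) (i : Fin n) : L :=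
  bFold a σ i • ∑ k ∈ sigmaOrbit σ i, h k

/-! Since `a` is `σ`-invariant and `⟨i⟩` is `σ`-stable, the column sum `∑_{k ∈ ⟨i⟩} a k l` is
constant for `l` in the orbit `⟨j⟩`. Hence `∑_{k ∈ ⟨i⟩} h k` acts on every `f l`, `l ∈ ⟨j⟩`, by
the same scalar `-∑_{k ∈ ⟨i⟩} a k j`, and the factors `b i`, `b j` just ride along. -/

theorem Equiv.Perm.SameCycle.apply_eq_of_forall_apply_perm {α β : Type*} {σ : Equiv.Perm α}
    {g : α → β} (hg : ∀ x, g (σ x) = g x) {x y : α} (hxy : σ.SameCycle x y) : g y = g x := by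
  obtain ⟨m, rfl⟩ := hxy
  induction m using Int.induction_on with
  | zero => rfl
  | succ m ih => rw [add_comm, zpow_add, zpow_one, Equiv.Perm.mul_apply, hg, ih]
  | pred m ih =>
    rw [sub_eq_add_neg, add_comm, zpow_add, zpow_neg_one, Equiv.Perm.mul_apply, ← ih,
      ← hg (σ⁻¹ _), Equiv.Perm.coe_inv, Equiv.apply_symm_apply]

theorem apply_mem_sigmaOrbit_iff {n : ℕ} (σ : Equiv.Perm (Fin n)) (i k : Fin n) :
    σ k ∈ sigmaOrbit σ i ↔ k ∈ sigmaOrbit σ i := by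
  simp only [sigmaOrbit, Finset.mem_filter, Finset.mem_univ, true_and,
    Equiv.Perm.sameCycle_apply_right]

theorem sum_sigmaOrbit_comp_perm {n : ℕ} {M : Type*} [AddCommMonoid M] (σ : Equiv.Perm (Fin n))
    (i : Fin n) (g : Fin n → M) :
    ∑ k ∈ sigmaOrbit σ i, g (σ k) = ∑ k ∈ sigmaOrbit σ i, g k :=
  Finset.sum_equiv σ (fun k => (apply_mem_sigmaOrbit_iff σ i k).symm) fun _ _ => rfl

theorem sum_sigmaOrbit_eq_of_sameCycle {n : ℕ} {M : Type*} [AddCommMonoid M]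
    (a : Fin n → Fin n → M) (σ : Equiv.Perm (Fin n)) (hσ : ∀ i j, a (σ i) (σ j) = a i j)
    (i : Fin n) {j l : Fin n} (hjl : σ.SameCycle j l) :
    ∑ k ∈ sigmaOrbit σ i, a k l = ∑ k ∈ sigmaOrbit σ i, a k j := by
  refine hjl.apply_eq_of_forall_apply_perm (g := fun l => ∑ k ∈ sigmaOrbit σ i, a k l)
    fun x => ?_
  rw [← sum_sigmaOrbit_comp_perm σ i]
  exact Finset.sum_congr rfl fun k _ => hσ k x

theorem lie_sum_sum_eq_neg_smul {ι κ L : Type*} [LieRing L] {a : ι → κ → ℤ} {h : ι → L}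
    {f : κ → L} (hhf : ∀ k l, ⁅h k, f l⁆ = (-(a k l)) • f l) (s : Finset ι) (t : Finset κ)
    {c : ℤ} (hc : ∀ l ∈ t, ∑ k ∈ s, a k l = c) :
    ⁅∑ k ∈ s, h k, ∑ l ∈ t, f l⁆ = (-c) • ∑ l ∈ t, f l := by
  rw [lie_sum, Finset.smul_sum]
  refine Finset.sum_congr rfl fun l hl => ?_
  rw [sum_lie, ← hc l hl]
  simp only [hhf, ← Finset.sum_smul, Finset.sum_neg_distrib]

theorem folded_H_F_general {L : Type*} [LieRing L]
    {n : ℕ}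
    (a : Fin n → Fin n → ℤ)
    (f h : Fin n → L)
    (hhf : ∀ i j, ⁅h i, f j⁆ = (-(a i j)) • f j)
    (σ : Equiv.Perm (Fin n))
    (hσ : ∀ i j, a (σ i) (σ j) = a i j)
    (i j : Fin n) :
    ⁅HFold a σ h i, FFold a σ f j⁆ = (-(AFold a σ i j)) • FFold a σ f j := by
  have hcol : ∀ l ∈ sigmaOrbit σ j, ∑ k ∈ sigmaOrbit σ i, a k l = ∑ k ∈ sigmaOrbit σ i, a k j :=
    fun l hl => sum_sigmaOrbit_eq_of_sameCycle a σ hσ i (Finset.mem_filter.mp hl).2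
  simp only [HFold, FFold, AFold, smul_lie, lie_smul,
    lie_sum_sum_eq_neg_smul hhf _ _ hcol, smul_smul]
  congr 1
  ring

theorem folded_H_F {K L : Type*} [Field K] [CharZero K] [LieRing L] [LieAlgebra K L]
    {n : ℕ} (hn : 1 ≤ n)
    (a : Fin n → Fin n → ℤ)
    (hdiag : ∀ i, a i i = 2)
    (hoff : ∀ i j, i ≠ j → a i j ≤ 0)
    (e f h : Fin n → L)
    (hhh : ∀ i j, ⁅h i, h j⁆ = 0)
    (hef : ∀ i, ⁅e i, f i⁆ = h i)
    (hef' : ∀ i j, i ≠ j → ⁅e i, f j⁆ = 0)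
    (hhe : ∀ i j, ⁅h i, e j⁆ = a i j • e j)
    (hhf : ∀ i j, ⁅h i, f j⁆ = (-(a i j)) • f j)
    (σ : Equiv.Perm (Fin n))
    (hσ : ∀ i j, a (σ i) (σ j) = a i j)
    (i j : Fin n) :
    ⁅HFold a σ h i, FFold a σ f j⁆ = (-(AFold a σ i j)) • FFold a σ f j :=
  folded_H_F_general a f h hhf σ hσ i j
end

section
/- Suppose that b i = 1 (equivalently, a k i = 0 for every k ∈ ⟨i⟩ with k ≠ i) and that j ∉ ⟨i⟩ (so that A i j ≤ 0). Then (ad (F i))^{(1 − A i j).toNat} (F j) = 0, where ad x = ⁅x, ·⁆. -/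
open scoped Classical

/-! Since `b i = 1`, the column sum of `a` over `⟨i⟩` at `i` is `2 = a i i`, so `a k i = 0` for the
other `k ∈ ⟨i⟩`; by σ-invariance `a k l = 0` for all distinct `k, l ∈ ⟨i⟩`, and the Serre relations
make the `ad (f k)`, `k ∈ ⟨i⟩`, commute. For `l ∈ ⟨j⟩`, each `ad (f k)` kills `f l` in power
`1 - a k l`, so their commuting sum `ad (F i)` kills it in power `1 + ∑ₖ (-a k l) = 1 - A i j`. -/

namespace Module.End

variable {R M : Type*} [CommSemiring R] [AddCommMonoid M] [Module R M]

theorem pow_add_add_one_apply_eq_zero {T U : End R M} (hTU : Commute T U) {v : M} {p q : ℕ}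
    (hT : (T ^ (p + 1)) v = 0) (hU : (U ^ (q + 1)) v = 0) :
    ((T + U) ^ (p + q + 1)) v = 0 := by
  rw [hTU.add_pow', LinearMap.sum_apply]
  refine Finset.sum_eq_zero fun x hx => ?_
  rw [Finset.HasAntidiagonal.mem_antidiagonal] at hx
  rw [LinearMap.smul_apply, mul_apply]
  by_cases hx₁ : p + 1 ≤ x.1
  · rw [← mul_apply, (hTU.pow_pow x.1 x.2).eq, mul_apply, pow_map_zero_of_le hx₁ hT,
      map_zero, smul_zero]
  · rw [pow_map_zero_of_le (by omega) hU, map_zero, smul_zero]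

theorem pow_sum_add_one_apply_eq_zero {ι : Type*} (s : Finset ι) {T : ι → End R M}
    (hT : (s : Set ι).Pairwise fun k l => Commute (T k) (T l)) {c : ι → ℕ} {v : M}
    (hv : ∀ k ∈ s, (T k ^ (c k + 1)) v = 0) :
    ((∑ k ∈ s, T k) ^ (∑ k ∈ s, c k + 1)) v = 0 := by
  classical
  induction s using Finset.induction_on with
  | empty => simp
  | insert k s hk ih =>
    rw [Finset.coe_insert, Set.pairwise_insert] at hT
    rw [Finset.sum_insert hk, Finset.sum_insert hk, add_assoc]
    refine pow_add_add_one_apply_eq_zero (Commute.sum_right _ _ _ fun l hl => ?_)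
      (hv k (Finset.mem_insert_self k s)) (ih hT.1 fun l hl => hv l (Finset.mem_insert_of_mem hl))
    exact (hT.2 l hl fun hkl => hk (hkl ▸ hl)).1

end Module.End

theorem LieAlgebra.commute_ad_of_lie_eq_zero {R L : Type*} [CommRing R] [LieRing L]
    [LieAlgebra R L] {x y : L} (h : ⁅x, y⁆ = 0) : Commute (ad R L x) (ad R L y) := by
  ext z
  simp [leibniz_lie x y z, h]

theorem Equiv.Perm.apply_zpow_apply_zpow {ι α : Type*} {σ : Equiv.Perm ι} {a : ι → ι → α}
    (hσ : ∀ x y, a (σ x) (σ y) = a x y) (m : ℤ) (x y : ι) :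
    a ((σ ^ m) x) ((σ ^ m) y) = a x y := by
  induction m using Int.induction_on generalizing x y with
  | zero => rfl
  | succ m ih => rw [zpow_add_one, Equiv.Perm.mul_apply, Equiv.Perm.mul_apply, ih, hσ]
  | pred m ih =>
    rw [zpow_sub_one, Equiv.Perm.mul_apply, Equiv.Perm.mul_apply, ih, ← hσ]
    simp

section sigmaOrbit

variable {n : ℕ} {σ : Equiv.Perm (Fin n)}

theorem mem_sigmaOrbit {i k : Fin n} : k ∈ sigmaOrbit σ i ↔ σ.SameCycle i k := by
  simp [sigmaOrbit]

theorem notMem_sigmaOrbit_of_mem {i j l : Fin n} (hj : j ∉ sigmaOrbit σ i)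
    (hl : l ∈ sigmaOrbit σ j) : l ∉ sigmaOrbit σ i := fun hli =>
  hj (mem_sigmaOrbit.2 ((mem_sigmaOrbit.1 hli).trans (mem_sigmaOrbit.1 hl).symm))

theorem sum_sigmaOrbit_comp_zpow {M : Type*} [AddCommMonoid M] (g : Fin n → M) (i : Fin n)
    (m : ℤ) : ∑ k ∈ sigmaOrbit σ i, g ((σ ^ m) k) = ∑ k ∈ sigmaOrbit σ i, g k :=
  Finset.sum_equiv (σ ^ m) (fun _ => by simp only [mem_sigmaOrbit, Equiv.Perm.sameCycle_zpow_right])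
    fun _ _ => rfl

theorem sum_sigmaOrbit_eq_of_mem {a : Fin n → Fin n → ℤ} (hσ : ∀ x y, a (σ x) (σ y) = a x y)
    (i : Fin n) {j l : Fin n} (hl : l ∈ sigmaOrbit σ j) :
    ∑ k ∈ sigmaOrbit σ i, a k l = ∑ k ∈ sigmaOrbit σ i, a k j := by
  obtain ⟨m, rfl⟩ := mem_sigmaOrbit.1 hl
  rw [← sum_sigmaOrbit_comp_zpow _ i m]
  simp only [Equiv.Perm.apply_zpow_apply_zpow hσ]

theorem eq_zero_of_mem_sigmaOrbit_of_bFold_eq_one {a : Fin n → Fin n → ℤ}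
    (hdiag : ∀ i, a i i = 2) (hoff : ∀ i j, i ≠ j → a i j ≤ 0)
    (hσ : ∀ x y, a (σ x) (σ y) = a x y) {i k l : Fin n} (hb : bFold a σ i = 1)
    (hk : k ∈ sigmaOrbit σ i) (hl : l ∈ sigmaOrbit σ i) (hkl : k ≠ l) : a k l = 0 := by
  have hsum : ∑ x ∈ sigmaOrbit σ i, a x l = a l l := by
    rw [bFold] at hb
    rw [sum_sigmaOrbit_eq_of_mem hσ i hl, hdiag]
    omega
  rw [← Finset.add_sum_erase _ _ hl, add_eq_left] at hsum
  exact (Finset.sum_eq_zero_iff_of_nonpos fun x hx => hoff x l (Finset.ne_of_mem_erase hx)).1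
    hsum k (Finset.mem_erase.2 ⟨hkl, hk⟩)

theorem one_sub_AFold_toNat_of_bFold_eq_one {a : Fin n → Fin n → ℤ}
    (hoff : ∀ i j, i ≠ j → a i j ≤ 0) (hσ : ∀ x y, a (σ x) (σ y) = a x y) {i j l : Fin n}
    (hb : bFold a σ i = 1) (hj : j ∉ sigmaOrbit σ i) (hl : l ∈ sigmaOrbit σ j) :
    (1 - AFold a σ i j).toNat = ∑ k ∈ sigmaOrbit σ i, (-a k l).toNat + 1 := by
  have hsum : ((∑ k ∈ sigmaOrbit σ i, (-a k l).toNat : ℕ) : ℤ) = -∑ k ∈ sigmaOrbit σ i, a k l := by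
    rw [Nat.cast_sum, ← Finset.sum_neg_distrib]
    refine Finset.sum_congr rfl fun k hk => Int.toNat_of_nonneg (neg_nonneg.2 ?_)
    exact hoff k l fun h => notMem_sigmaOrbit_of_mem hj hl (h ▸ hk)
  rw [AFold, hb, one_mul, ← sum_sigmaOrbit_eq_of_mem hσ i hl]
  omega

end sigmaOrbit

theorem folded_serre_F_of_b_eq_one_general {K L : Type*} [Field K] [LieRing L] [LieAlgebra K L]
    {n : ℕ}
    (a : Fin n → Fin n → ℤ)
    (hdiag : ∀ i, a i i = 2)
    (hoff : ∀ i j, i ≠ j → a i j ≤ 0)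
    (f : Fin n → L)
    (σ : Equiv.Perm (Fin n))
    (hσ : ∀ i j, a (σ i) (σ j) = a i j)
    (hSerreF : ∀ i j, i ≠ j →
      ((LieAlgebra.ad K L (f i)) ^ (1 - a i j).toNat) (f j) = 0)
    (i j : Fin n)
    (hb : bFold a σ i = 1)
    (hj : j ∉ sigmaOrbit σ i) :
    ((LieAlgebra.ad K L (FFold a σ f i)) ^ (1 - AFold a σ i j).toNat) (FFold a σ f j) = 0 := by
  have hcomm : (sigmaOrbit σ i : Set (Fin n)).Pairwise fun k l =>
      Commute (LieAlgebra.ad K L (f k)) (LieAlgebra.ad K L (f l)) := fun k hk l hl hkl =>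
    LieAlgebra.commute_ad_of_lie_eq_zero <| by
      simpa [eq_zero_of_mem_sigmaOrbit_of_bFold_eq_one hdiag hoff hσ hb hk hl hkl] using
        hSerreF k l hkl
  rw [FFold, hb, one_smul, map_sum, FFold, map_zsmul, map_sum]
  refine smul_eq_zero_of_right _ (Finset.sum_eq_zero fun l hl => ?_)
  rw [one_sub_AFold_toNat_of_bFold_eq_one hoff hσ hb hj hl]
  refine Module.End.pow_sum_add_one_apply_eq_zero _ hcomm fun k hk => ?_
  have hkl : k ≠ l := fun h => notMem_sigmaOrbit_of_mem hj hl (h ▸ hk)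
  simpa only [show (1 - a k l).toNat = (-a k l).toNat + 1 by have := hoff k l hkl; omega] using
    hSerreF k l hkl

theorem folded_serre_F_of_b_eq_one {K L : Type*} [Field K] [CharZero K] [LieRing L] [LieAlgebra K L]
    {n : ℕ} (hn : 1 ≤ n)
    (a : Fin n → Fin n → ℤ)
    (hdiag : ∀ i, a i i = 2)
    (hoff : ∀ i j, i ≠ j → a i j ≤ 0)
    (e f h : Fin n → L)
    (hhh : ∀ i j, ⁅h i, h j⁆ = 0)
    (hef : ∀ i, ⁅e i, f i⁆ = h i)
    (hef' : ∀ i j, i ≠ j → ⁅e i, f j⁆ = 0)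
    (hhe : ∀ i j, ⁅h i, e j⁆ = a i j • e j)
    (hhf : ∀ i j, ⁅h i, f j⁆ = (-(a i j)) • f j)
    (σ : Equiv.Perm (Fin n))
    (hσ : ∀ i j, a (σ i) (σ j) = a i j)
    (hSerreE : ∀ i j, i ≠ j →
      ((LieAlgebra.ad K L (e i)) ^ (1 - a i j).toNat) (e j) = 0)
    (hSerreF : ∀ i j, i ≠ j →
      ((LieAlgebra.ad K L (f i)) ^ (1 - a i j).toNat) (f j) = 0)
    (i j : Fin n)
    (hb : bFold a σ i = 1)
    (hj : j ∉ sigmaOrbit σ i) :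
    ((LieAlgebra.ad K L (FFold a σ f i)) ^ (1 - AFold a σ i j).toNat) (FFold a σ f j) = 0 :=
  folded_serre_F_of_b_eq_one_general a hdiag hoff f σ hσ hSerreF i j hb hj
end

section
/- For all natural numbers k and l one has the identity (k + l)! • Z^k (X^l v) = ((−1)^k · l!) • Y^k (X^{k+l} v) (equivalently, Z^k (X^l v) = ((−1)^k / ((l+1)(l+2)⋯(l+k))) • Y^k (X^{k+l} v) in the characteristic-zero field). -/
/-!
Since `Z = [X, Y]` commutes with `X`, the bracket with `Y` acts on powers of `X` as a derivation:
`[X ^ (n + 1), Y] = (n + 1) • Z * X ^ n`. On a vector killed by `Y` this reads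
`Y (X ^ (n + 1) v) = -(n + 1) • Z (X ^ n v)`, and as `Z` also commutes with `Y`, each further
application of `Y` trades one power of `X` for a factor `-(k + l + 1)` and one power of `Z`;
induction on `k` assembles these factors into `(-1) ^ k * (k + l)! / l!`.
-/

theorem pow_succ_mul_sub_mul_pow_succ {A : Type*} [Ring A] {X Y : A}
    (hX : Commute X (X * Y - Y * X)) (n : ℕ) :
    X ^ (n + 1) * Y - Y * X ^ (n + 1) = (n + 1) • ((X * Y - Y * X) * X ^ n) := by
  induction n with
  | zero => simp
  | succ n ih =>
    calc X ^ (n + 2) * Y - Y * X ^ (n + 2)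
        = X * (X ^ (n + 1) * Y - Y * X ^ (n + 1)) + (X * Y - Y * X) * X ^ (n + 1) := by
          rw [pow_succ' X (n + 1)]
          noncomm_ring
      _ = (n + 2) • ((X * Y - Y * X) * X ^ (n + 1)) := by
          rw [ih, mul_smul_comm, ← mul_assoc, hX.eq, mul_assoc, ← pow_succ']
          module

section Module

variable {R M : Type*} [Semiring R] [AddCommGroup M] [Module R M] {X Y : Module.End R M}

theorem apply_pow_succ_eq_neg_smul (hX : Commute X (X * Y - Y * X)) {v : M} (hYv : Y v = 0)
    (n : ℕ) : Y ((X ^ (n + 1)) v) = -((n + 1) • (X * Y - Y * X) ((X ^ n) v)) := by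
  have h := congrArg (· v) (pow_succ_mul_sub_mul_pow_succ hX n)
  simp only [LinearMap.sub_apply, Module.End.mul_apply, LinearMap.smul_apply, hYv, map_zero,
    zero_sub] at h ⊢
  rw [← h, neg_neg]

theorem pow_succ_apply_pow_succ_eq_neg_smul (hX : Commute X (X * Y - Y * X))
    (hY : Commute Y (X * Y - Y * X)) {v : M} (hYv : Y v = 0) (k n : ℕ) :
    (Y ^ (k + 1)) ((X ^ (n + 1)) v) =
      -((n + 1) • (X * Y - Y * X) ((Y ^ k) ((X ^ n) v))) := by
  rw [pow_succ, Module.End.mul_apply, apply_pow_succ_eq_neg_smul hX hYv, map_neg, map_nsmul,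
    ← Module.End.mul_apply, (hY.pow_left k).eq, Module.End.mul_apply]

end Module

theorem Z_pow_X_pow_eq_general {K V : Type*} [Field K] [AddCommGroup V] [Module K V]
    (X Y Z : Module.End K V)
    (hZ : Z = X * Y - Y * X)
    (hXZ : X * Z = Z * X)
    (hYZ : Y * Z = Z * Y)
    (v : V) (hYv : Y v = 0)
    (k l : ℕ) :
    (k + l).factorial • ((Z ^ k) ((X ^ l) v)) =
      ((-1 : ℤ) ^ k * (l.factorial : ℤ)) • ((Y ^ k) ((X ^ (k + l)) v)) := by
  subst hZ
  induction k with
  | zero => simp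
  | succ k ih =>
    rw [add_right_comm, pow_succ_apply_pow_succ_eq_neg_smul hXZ hYZ hYv, Nat.factorial_succ,
      mul_smul, pow_succ', Module.End.mul_apply, ← map_nsmul, ih, map_zsmul]
    module

theorem Z_pow_X_pow_eq {K V : Type*} [Field K] [CharZero K] [AddCommGroup V] [Module K V]
    (X Y Z : Module.End K V)
    (hZ : Z = X * Y - Y * X)
    (hXZ : X * Z = Z * X)
    (hYZ : Y * Z = Z * Y)
    (v : V) (hYv : Y v = 0)
    (k l : ℕ) :
    (k + l).factorial • ((Z ^ k) ((X ^ l) v)) =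
      ((-1 : ℤ) ^ k * (l.factorial : ℤ)) • ((Y ^ k) ((X ^ (k + l)) v)) :=
  Z_pow_X_pow_eq_general X Y Z hZ hXZ hYZ v hYv k l
end
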